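/- arXiv:2103.13523 — 2 statements merged into one kernel-verified Lean document; each statement's English description precedes it below -/
import Mathlib

section
/- Let A = Ā + E where A, Ā ∈ ℝ^{p×p} are symmetric positive semidefinite, let P ∈ ℝ^{p×m} have orthonormal columns, and assume λ₁(Ā) = 1 (so ‖Ā‖₂ ≤ 1 and ‖P‖₂ ≤ 1). Let Q ∈ ℝ^{p×m} satisfy QᵀQ = I_m with ‖q_i‖₀ ≤ k_i for each column, and ĀQ ≠ 0, AQ ≠ 0. Then ‖PᵀAQ‖_F / ‖AQ‖_F ≥ (‖PᵀĀQ‖_F − 2√m ρ(E,K)) / ‖ĀQ‖_F, where ρ(E,K) = max{‖EQ'‖₂ : Q'ᵀQ' = I_m, ‖q'_i‖₀ ≤ k_i for each i}. -/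
open Matrix

noncomputable def specNorm {p m : ℕ} (A : Matrix (Fin p) (Fin m) ℝ) : ℝ :=
  ‖LinearMap.toContinuousLinearMap (Matrix.toEuclideanLin A)‖

noncomputable def frobNorm {p m : ℕ} (A : Matrix (Fin p) (Fin m) ℝ) : ℝ :=
  Real.sqrt (∑ i, ∑ j, (A i j) ^ 2)

noncomputable def enorm {p : ℕ} (v : Fin p → ℝ) : ℝ :=
  Real.sqrt (∑ i, (v i) ^ 2)

noncomputable def l0norm {p : ℕ} (v : Fin p → ℝ) : ℕ :=
  (Finset.univ.filter fun i => v i ≠ 0).card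

noncomputable def truncate {p : ℕ} (y : Fin p → ℝ) (F : Finset (Fin p)) : Fin p → ℝ :=
  fun i => if i ∈ F then y i else 0

noncomputable def rhoEK {p m : ℕ} (E : Matrix (Fin p) (Fin p) ℝ) (K : Fin m → ℕ) : ℝ :=
  sSup {c | ∃ Q : Matrix (Fin p) (Fin m) ℝ,
    Qᵀ * Q = 1 ∧ (∀ i, l0norm (fun r => Q r i) ≤ K i) ∧ c = specNorm (E * Q)}

noncomputable def sinTheta2 {p m : ℕ} (P Q : Matrix (Fin p) (Fin m) ℝ) : ℝ :=
  specNorm ((1 - P * Pᵀ) * Q)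

noncomputable def sinThetaF {p m : ℕ} (P Q : Matrix (Fin p) (Fin m) ℝ) : ℝ :=
  frobNorm ((1 - P * Pᵀ) * Q)

/-! ### Auxiliary lemmas -/

-- frobNorm as Euclidean norm
lemma frobNorm_eq {p m : ℕ} (A : Matrix (Fin p) (Fin m) ℝ) :
    frobNorm A = ‖((WithLp.equiv 2 (Fin p × Fin m → ℝ)).symm (fun ij => A ij.1 ij.2) : EuclideanSpace ℝ (Fin p × Fin m))‖ := by
  rw [EuclideanSpace.norm_eq, frobNorm]
  congr 1
  rw [Fintype.sum_prod_type]
  simp [sq_abs]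

lemma frobNorm_nonneg {p m : ℕ} (A : Matrix (Fin p) (Fin m) ℝ) : 0 ≤ frobNorm A :=
  Real.sqrt_nonneg _

lemma frob_triangle {p m : ℕ} (X Y : Matrix (Fin p) (Fin m) ℝ) :
    frobNorm (X + Y) ≤ frobNorm X + frobNorm Y := by
  rw [frobNorm_eq, frobNorm_eq, frobNorm_eq]
  have := norm_add_le ((WithLp.equiv 2 (Fin p × Fin m → ℝ)).symm (fun ij => X ij.1 ij.2) : EuclideanSpace ℝ (Fin p × Fin m)) ((WithLp.equiv 2 (Fin p × Fin m → ℝ)).symm (fun ij => Y ij.1 ij.2))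
  convert this using 2 <;> rfl

lemma frobNorm_neg {p m : ℕ} (X : Matrix (Fin p) (Fin m) ℝ) :
    frobNorm (-X) = frobNorm X := by
  unfold frobNorm
  congr 1
  apply Finset.sum_congr rfl
  intro i _
  apply Finset.sum_congr rfl
  intro j _
  simp

lemma frob_pos {p m : ℕ} {X : Matrix (Fin p) (Fin m) ℝ} (h : X ≠ 0) : 0 < frobNorm X := by
  rw [frobNorm_eq, norm_pos_iff]
  intro hc
  apply h
  ext i j
  have := congrFun (congrArg (WithLp.equiv 2 (Fin p × Fin m → ℝ)) hc) (i, j)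
  simpa using this

lemma norm_teL {p m : ℕ} (M : Matrix (Fin p) (Fin m) ℝ) (v : EuclideanSpace ℝ (Fin m)) :
    ‖Matrix.toEuclideanLin M v‖ = Real.sqrt (∑ i, (M *ᵥ (WithLp.equiv 2 (Fin m → ℝ) v)) i ^ 2) := by
  rw [Matrix.toEuclideanLin_apply, EuclideanSpace.norm_eq]
  simp [sq_abs]

lemma mulVec_iso {p m : ℕ} {Q : Matrix (Fin p) (Fin m) ℝ} (hQ : Qᵀ * Q = 1)
    (w : Fin m → ℝ) : ∑ i, (Q *ᵥ w) i ^ 2 = ∑ j, w j ^ 2 := by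
  have h1 : Qᵀ *ᵥ (Q *ᵥ w) = w := by
    rw [Matrix.mulVec_mulVec, hQ, Matrix.one_mulVec]
  have h2 : (Q *ᵥ w) ⬝ᵥ (Q *ᵥ w) = w ⬝ᵥ w := by
    conv_lhs => rw [Matrix.dotProduct_mulVec, ← Matrix.mulVec_transpose, h1]
  simpa [dotProduct, pow_two] using h2

lemma teL_iso {p m : ℕ} {Q : Matrix (Fin p) (Fin m) ℝ} (hQ : Qᵀ * Q = 1)
    (v : EuclideanSpace ℝ (Fin m)) : ‖Matrix.toEuclideanLin Q v‖ = ‖v‖ := by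
  rw [norm_teL, mulVec_iso hQ, EuclideanSpace.norm_eq]
  simp [sq_abs]

lemma specNorm_nonneg {p m : ℕ} (A : Matrix (Fin p) (Fin m) ℝ) : 0 ≤ specNorm A :=
  norm_nonneg _

lemma teL_mul {p q m : ℕ} (E : Matrix (Fin p) (Fin q) ℝ) (Q : Matrix (Fin q) (Fin m) ℝ)
    (v : EuclideanSpace ℝ (Fin m)) :
    Matrix.toEuclideanLin (E * Q) v = Matrix.toEuclideanLin E (Matrix.toEuclideanLin Q v) := by
  rw [Matrix.toEuclideanLin_apply, Matrix.toEuclideanLin_apply, Matrix.toEuclideanLin_apply]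
  simp [Matrix.mulVec_mulVec]

lemma spec_mul_le {p m : ℕ} (E : Matrix (Fin p) (Fin p) ℝ) {Q : Matrix (Fin p) (Fin m) ℝ}
    (hQ : Qᵀ * Q = 1) : specNorm (E * Q) ≤ specNorm E := by
  apply ContinuousLinearMap.opNorm_le_bound _ (specNorm_nonneg E)
  intro v
  have : (LinearMap.toContinuousLinearMap (Matrix.toEuclideanLin (E * Q))) v
      = Matrix.toEuclideanLin (E * Q) v := rfl
  rw [this, teL_mul, ← teL_iso hQ v]
  exact (LinearMap.toContinuousLinearMap (Matrix.toEuclideanLin E)).le_opNorm _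

lemma col_le_spec {p m : ℕ} (X : Matrix (Fin p) (Fin m) ℝ) (j : Fin m) :
    Real.sqrt (∑ i, X i j ^ 2) ≤ specNorm X := by
  have h := (LinearMap.toContinuousLinearMap (Matrix.toEuclideanLin X)).le_opNorm
    (EuclideanSpace.single j (1 : ℝ))
  rw [EuclideanSpace.norm_single] at h
  have he : ‖(LinearMap.toContinuousLinearMap (Matrix.toEuclideanLin X)) (EuclideanSpace.single j (1:ℝ))‖
      = Real.sqrt (∑ i, X i j ^ 2) := by
    have : (LinearMap.toContinuousLinearMap (Matrix.toEuclideanLin X)) (EuclideanSpace.single j (1:ℝ))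
        = Matrix.toEuclideanLin X (EuclideanSpace.single j (1:ℝ)) := rfl
    rw [this, norm_teL]
    congr 1
    apply Finset.sum_congr rfl
    intro i _
    congr 1
    rw [WithLp.equiv_apply, EuclideanSpace.ofLp_single]
    simp [Matrix.mulVec_single]
  rw [he] at h
  simpa [specNorm] using h

lemma frob_le_sqrt_spec {p m : ℕ} (X : Matrix (Fin p) (Fin m) ℝ) :
    frobNorm X ≤ Real.sqrt m * specNorm X := by
  have hs := specNorm_nonneg X
  have key : ∑ i, ∑ j, X i j ^ 2 ≤ (m : ℝ) * specNorm X ^ 2 := by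
    rw [Finset.sum_comm]
    calc ∑ j, ∑ i, X i j ^ 2 ≤ ∑ _j : Fin m, specNorm X ^ 2 := by
          apply Finset.sum_le_sum
          intro j _
          have h1 := col_le_spec X j
          have h2 : (0:ℝ) ≤ ∑ i, X i j ^ 2 := by positivity
          calc ∑ i, X i j ^ 2 = Real.sqrt (∑ i, X i j ^ 2) ^ 2 := (Real.sq_sqrt h2).symm
            _ ≤ specNorm X ^ 2 := pow_le_pow_left₀ (Real.sqrt_nonneg _) h1 2
      _ = (m : ℝ) * specNorm X ^ 2 := by simp [Finset.sum_const, mul_comm]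
  calc frobNorm X ≤ Real.sqrt ((m : ℝ) * specNorm X ^ 2) := Real.sqrt_le_sqrt key
    _ = Real.sqrt m * specNorm X := by
        rw [Real.sqrt_mul (by positivity), Real.sqrt_sq hs]

lemma fsq_trace {a b : ℕ} (M : Matrix (Fin a) (Fin b) ℝ) :
    ∑ i, ∑ j, M i j ^ 2 = (Mᵀ * M).trace := by
  rw [Matrix.trace, Finset.sum_comm]
  apply Finset.sum_congr rfl
  intro j _
  simp [Matrix.diag, Matrix.mul_apply, pow_two, Matrix.transpose_apply]

lemma fsq_nonneg {a b : ℕ} (M : Matrix (Fin a) (Fin b) ℝ) :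
    0 ≤ (Mᵀ * M).trace := by
  rw [← fsq_trace]
  positivity

lemma proj_le {p m q : ℕ} {P : Matrix (Fin p) (Fin m) ℝ} (hP : Pᵀ * P = 1)
    (X : Matrix (Fin p) (Fin q) ℝ) : frobNorm (Pᵀ * X) ≤ frobNorm X := by
  apply Real.sqrt_le_sqrt
  rw [fsq_trace, fsq_trace]
  set M : Matrix (Fin p) (Fin p) ℝ := 1 - P * Pᵀ with hMdef
  have hPP : P * Pᵀ * (P * Pᵀ) = P * Pᵀ := by
    rw [Matrix.mul_assoc, ← Matrix.mul_assoc Pᵀ, hP, Matrix.one_mul]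
  have key : (Pᵀ * X)ᵀ * (Pᵀ * X) + (M * X)ᵀ * (M * X) = Xᵀ * X := by
    have hMt : Mᵀ = M := by
      rw [hMdef, Matrix.transpose_sub, Matrix.transpose_one, Matrix.transpose_mul,
        Matrix.transpose_transpose]
    have hMM : M * M = M := by
      rw [hMdef, Matrix.sub_mul, Matrix.mul_sub, Matrix.mul_sub, hPP]
      simp
    rw [Matrix.transpose_mul, Matrix.transpose_mul, hMt, Matrix.transpose_transpose]
    rw [Matrix.mul_assoc Xᵀ]
    have h2 : Xᵀ * M * (M * X) = Xᵀ * (M * X) := by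
      rw [Matrix.mul_assoc, ← Matrix.mul_assoc M, hMM]
    have h3 : M * X = X - P * (Pᵀ * X) := by
      rw [hMdef, Matrix.sub_mul, Matrix.one_mul, Matrix.mul_assoc]
    rw [h2, h3, Matrix.mul_sub]
    abel
  calc ((Pᵀ * X)ᵀ * (Pᵀ * X)).trace
      ≤ ((Pᵀ * X)ᵀ * (Pᵀ * X)).trace + ((M * X)ᵀ * (M * X)).trace := by
        linarith [fsq_nonneg (M * X)]
    _ = (Xᵀ * X).trace := by rw [← Matrix.trace_add, key]

lemma rho_nonneg {p m : ℕ} (E : Matrix (Fin p) (Fin p) ℝ) (K : Fin m → ℕ) :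
    0 ≤ rhoEK E K := by
  apply Real.sSup_nonneg
  rintro c ⟨Q, _, _, rfl⟩
  exact specNorm_nonneg _

lemma spec_le_rho {p m : ℕ} (E : Matrix (Fin p) (Fin p) ℝ) (K : Fin m → ℕ)
    {Q : Matrix (Fin p) (Fin m) ℝ} (hQ : Qᵀ * Q = 1)
    (hQs : ∀ i, l0norm (fun r => Q r i) ≤ K i) :
    specNorm (E * Q) ≤ rhoEK E K := by
  apply le_csSup
  · refine ⟨specNorm E, ?_⟩
    rintro c ⟨Q', hQ', _, rfl⟩
    exact spec_mul_le E hQ'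
  · exact ⟨Q, hQ, hQs, rfl⟩

/-- intermediate (un-squared) perturbation bound. -/
theorem perturbation_bound_unsquared
    {p m : ℕ} (hp : 0 < p)
    (Abar A E : Matrix (Fin p) (Fin p) ℝ)
    (hAbar : Abar.PosSemidef) (hA : A.PosSemidef)
    (hAE : A = Abar + E)
    (lam : Fin p → ℝ)
    (hord : ∀ i j : Fin p, i ≤ j → lam j ≤ lam i)
    (hlam1 : lam ⟨0, hp⟩ = 1)
    (V : Matrix (Fin p) (Fin p) ℝ) (hV : Vᵀ * V = 1)
    (hAV : Abar * V = V * Matrix.diagonal lam)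
    (P : Matrix (Fin p) (Fin m) ℝ) (hP : Pᵀ * P = 1)
    (K : Fin m → ℕ)
    (Q : Matrix (Fin p) (Fin m) ℝ) (hQ : Qᵀ * Q = 1)
    (hQsparse : ∀ i : Fin m, l0norm (fun r => Q r i) ≤ K i)
    (hAbarQ : Abar * Q ≠ 0) (hAQ : A * Q ≠ 0) :
    frobNorm (Pᵀ * (A * Q)) / frobNorm (A * Q) ≥
      (frobNorm (Pᵀ * (Abar * Q)) - 2 * Real.sqrt m * rhoEK E K)
        / frobNorm (Abar * Q) := by
  set ρ := rhoEK E K with hρdef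
  set r := Real.sqrt m * ρ with hrdef
  set a := frobNorm (Pᵀ * (Abar * Q)) with hadef
  set b := frobNorm (Abar * Q) with hbdef
  set a' := frobNorm (Pᵀ * (A * Q)) with ha'def
  set b' := frobNorm (A * Q) with hb'def
  have hρ0 : 0 ≤ ρ := rho_nonneg E K
  have hr0 : 0 ≤ r := mul_nonneg (Real.sqrt_nonneg _) hρ0
  have hb : 0 < b := frob_pos hAbarQ
  have hb' : 0 < b' := frob_pos hAQ
  have ha0 : 0 ≤ a := frobNorm_nonneg _
  have ha'0 : 0 ≤ a' := frobNorm_nonneg _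
  have h_ab : a ≤ b := proj_le hP (Abar * Q)
  have hEQ : frobNorm (E * Q) ≤ r := by
    calc frobNorm (E * Q) ≤ Real.sqrt m * specNorm (E * Q) := frob_le_sqrt_spec _
      _ ≤ Real.sqrt m * ρ := by
          apply mul_le_mul_of_nonneg_left (spec_le_rho E K hQ hQsparse) (Real.sqrt_nonneg _)
  -- a ≤ a' + r
  have h1 : a ≤ a' + r := by
    have heq : Pᵀ * (Abar * Q) = Pᵀ * (A * Q) + -(Pᵀ * (E * Q)) := by
      rw [hAE]
      rw [Matrix.add_mul, Matrix.mul_add]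
      abel
    calc a = frobNorm (Pᵀ * (A * Q) + -(Pᵀ * (E * Q))) := by rw [hadef, heq]
      _ ≤ a' + frobNorm (-(Pᵀ * (E * Q))) := frob_triangle _ _
      _ = a' + frobNorm (Pᵀ * (E * Q)) := by rw [frobNorm_neg]
      _ ≤ a' + frobNorm (E * Q) := by linarith [proj_le hP (E * Q)]
      _ ≤ a' + r := by linarith
  -- b' ≤ b + r
  have h2 : b' ≤ b + r := by
    have heq : A * Q = Abar * Q + E * Q := by rw [hAE, Matrix.add_mul]
    calc b' = frobNorm (Abar * Q + E * Q) := by rw [hb'def, heq]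
      _ ≤ b + frobNorm (E * Q) := frob_triangle _ _
      _ ≤ b + r := by linarith
  show (a - 2 * Real.sqrt m * ρ) / b ≤ a' / b'
  have h2r : 2 * Real.sqrt m * ρ = 2 * r := by rw [hrdef]; ring
  rw [h2r]
  by_cases hcase : a - r ≤ 0
  · have hnum : a - 2 * r ≤ 0 := by linarith
    calc (a - 2 * r) / b ≤ 0 := div_nonpos_of_nonpos_of_nonneg hnum hb.le
      _ ≤ a' / b' := div_nonneg ha'0 hb'.le
  · push_neg at hcase
    have har : 0 ≤ a - r := by linarith
    have step1 : (a - 2 * r) / b ≤ (a - r) / (b + r) := by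
      rw [div_le_div_iff₀ hb (by linarith)]
      nlinarith
    have step2 : (a - r) / (b + r) ≤ (a - r) / b' := by
      apply div_le_div_of_nonneg_left har hb' h2
    have step3 : (a - r) / b' ≤ a' / b' := by
      gcongr
      linarith
    linarith
end

section
/- Let Ā ∈ ℝ^{p×p} be symmetric with eigenvalues λ₁ ≥ ⋯ ≥ λ_p and λ_m > 0, and let P ∈ ℝ^{p×m} have as columns orthonormal eigenvectors for λ₁,…,λ_m. Then for every Q ∈ ℝ^{p×m} with QᵀQ = I_m, ‖ĀQ‖_F² ≥ m λ_m² (1 − ‖(I − PPᵀ)Q‖₂²). -/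
open Matrix

lemma sum_sq_eq_trace {p m : ℕ} (X : Matrix (Fin p) (Fin m) ℝ) :
    ∑ i, ∑ j, X i j ^ 2 = (Xᵀ * X).trace := by
  simp only [Matrix.trace, Matrix.diag, Matrix.mul_apply, Matrix.transpose_apply, ← sq]
  exact Finset.sum_comm

lemma frobNorm_sq {p m : ℕ} (X : Matrix (Fin p) (Fin m) ℝ) :
    frobNorm X ^ 2 = (Xᵀ * X).trace := by
  rw [frobNorm, Real.sq_sqrt (show (0:ℝ) ≤ ∑ i, ∑ j, X i j ^ 2 by positivity)]
  exact sum_sq_eq_trace X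

lemma trace_diag_mid {p m : ℕ} (d : Fin p → ℝ) (M : Matrix (Fin p) (Fin m) ℝ) :
    (Mᵀ * Matrix.diagonal d * M).trace = ∑ i, d i * ∑ j, M i j ^ 2 := by
  simp only [Matrix.trace, Matrix.diag, Matrix.mul_apply, Matrix.transpose_apply,
    Matrix.diagonal_apply, Finset.sum_mul, Finset.mul_sum]
  rw [Finset.sum_comm]
  refine Finset.sum_congr rfl fun i _ => ?_
  refine Finset.sum_congr rfl fun j _ => ?_
  rw [Finset.sum_eq_single i]
  · simp; ring
  · intro b _ hb; simp [hb]
  · simp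

lemma col_sq_le_spec {p m : ℕ} (X : Matrix (Fin p) (Fin m) ℝ) (j : Fin m) :
    ∑ i, X i j ^ 2 ≤ specNorm X ^ 2 := by
  have h := (LinearMap.toContinuousLinearMap (Matrix.toEuclideanLin X)).le_opNorm
      (EuclideanSpace.single j 1)
  rw [EuclideanSpace.norm_single, norm_one, mul_one] at h
  have hx : ‖(LinearMap.toContinuousLinearMap (Matrix.toEuclideanLin X))
      (EuclideanSpace.single j 1)‖ ^ 2 = ∑ i, X i j ^ 2 := by
    rw [LinearMap.coe_toContinuousLinearMap', Matrix.toEuclideanLin_apply]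
    rw [EuclideanSpace.norm_eq, Real.sq_sqrt (Finset.sum_nonneg fun i _ => sq_nonneg _)]
    refine Finset.sum_congr rfl fun i _ => ?_
    show ‖(X *ᵥ Pi.single j 1) i‖ ^ 2 = X i j ^ 2
    simp [Matrix.mulVec_single, Real.norm_eq_abs, sq_abs]
  calc ∑ i, X i j ^ 2 = _ := hx.symm
    _ ≤ specNorm X ^ 2 := pow_le_pow_left₀ (norm_nonneg _) h 2

lemma frob_sq_le_card_spec {p m : ℕ} (X : Matrix (Fin p) (Fin m) ℝ) :
    frobNorm X ^ 2 ≤ m * specNorm X ^ 2 := by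
  rw [frobNorm, Real.sq_sqrt (show (0:ℝ) ≤ ∑ i, ∑ j, X i j ^ 2 by positivity),
    Finset.sum_comm]
  calc ∑ j : Fin m, ∑ i, X i j ^ 2 ≤ ∑ _j : Fin m, specNorm X ^ 2 :=
        Finset.sum_le_sum fun j _ => col_sq_le_spec X j
    _ = m * specNorm X ^ 2 := by simp [Finset.sum_const, nsmul_eq_mul]


/-- lower bound on `‖ĀQ‖_F²`. -/
theorem AbarQ_frobenius_lower_bound
    {p m : ℕ} (hm1 : 1 ≤ m) (hmp : m ≤ p)
    (Abar : Matrix (Fin p) (Fin p) ℝ) (hAsym : Abar.IsSymm)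
    (lam : Fin p → ℝ)
    (hord : ∀ i j : Fin p, i ≤ j → lam j ≤ lam i)
    (hlm : 0 < lam ⟨m - 1, by omega⟩)
    (V : Matrix (Fin p) (Fin p) ℝ) (hV : Vᵀ * V = 1)
    (hAV : Abar * V = V * Matrix.diagonal lam)
    (P : Matrix (Fin p) (Fin m) ℝ)
    (hP : P = V.submatrix id (Fin.castLE hmp)) :
    ∀ Q : Matrix (Fin p) (Fin m) ℝ, Qᵀ * Q = 1 →
      frobNorm (Abar * Q) ^ 2 ≥
        m * lam ⟨m - 1, by omega⟩ ^ 2 * (1 - specNorm ((1 - P * Pᵀ) * Q) ^ 2) := by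
  intro Q hQ
  set lm := lam ⟨m - 1, by omega⟩ with hlmdef
  have hVV : V * Vᵀ = 1 := mul_eq_one_comm.mp hV
  have hA : Abar = V * Matrix.diagonal lam * Vᵀ := by
    rw [← hAV, Matrix.mul_assoc, hVV, Matrix.mul_one]
  -- P has orthonormal columns
  have hPtP : Pᵀ * P = 1 := by
    ext i j
    have h1 : (Pᵀ * P) i j = (Vᵀ * V) (Fin.castLE hmp i) (Fin.castLE hmp j) := by
      simp [hP, Matrix.mul_apply]
    rw [h1, hV]
    simp [Matrix.one_apply, Fin.castLE_inj]
  -- squared matrix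
  have hAA : Abar * Abar = V * Matrix.diagonal (fun i => lam i ^ 2) * Vᵀ := by
    rw [hA]
    have : Matrix.diagonal lam * (Vᵀ * (V * (Matrix.diagonal lam * Vᵀ)))
        = Matrix.diagonal (fun i => lam i ^ 2) * Vᵀ := by
      rw [← Matrix.mul_assoc Vᵀ V, hV, Matrix.one_mul, ← Matrix.mul_assoc,
        Matrix.diagonal_mul_diagonal]
      congr 1
      ext i
      ring
    simp only [Matrix.mul_assoc]
    rw [this]
  have h2 : (Abar * Q)ᵀ * (Abar * Q)
      = (Vᵀ * Q)ᵀ * Matrix.diagonal (fun i => lam i ^ 2) * (Vᵀ * Q) := by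
    rw [Matrix.transpose_mul, hAsym]
    simp only [Matrix.transpose_mul, Matrix.transpose_transpose, Matrix.mul_assoc]
    rw [← Matrix.mul_assoc Abar Abar Q, hAA]
    simp only [Matrix.mul_assoc]
  have key : frobNorm (Abar * Q) ^ 2 = ∑ i, lam i ^ 2 * ∑ j, (Vᵀ * Q) i j ^ 2 := by
    rw [frobNorm_sq, h2, trace_diag_mid]
  -- nonnegativity of row sums
  set s : Fin p → ℝ := fun i => ∑ j, (Vᵀ * Q) i j ^ 2 with hs
  have hsnn : ∀ i, 0 ≤ s i := fun i => Finset.sum_nonneg fun j _ => sq_nonneg _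
  -- step 1 : lower bound by top-m block
  have hstep1 : lm ^ 2 * ∑ i : Fin m, s (Fin.castLE hmp i) ≤ ∑ i, lam i ^ 2 * s i := by
    rw [Finset.mul_sum]
    calc ∑ i : Fin m, lm ^ 2 * s (Fin.castLE hmp i)
        ≤ ∑ i : Fin m, lam (Fin.castLE hmp i) ^ 2 * s (Fin.castLE hmp i) := by
          refine Finset.sum_le_sum fun i _ => ?_
          refine mul_le_mul_of_nonneg_right ?_ (hsnn _)
          refine pow_le_pow_left₀ hlm.le ?_ 2
          exact hord (Fin.castLE hmp i) ⟨m - 1, by omega⟩ (by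
            simp only [Fin.le_def, Fin.coe_castLE]
            omega)
      _ = ∑ i ∈ Finset.univ.map (Fin.castLEEmb hmp), lam i ^ 2 * s i := by
          rw [Finset.sum_map]; rfl
      _ ≤ ∑ i, lam i ^ 2 * s i := by
          refine Finset.sum_le_sum_of_subset_of_nonneg (Finset.subset_univ _) ?_
          exact fun i _ _ => mul_nonneg (sq_nonneg _) (hsnn i)
  -- identify the block sum with trace of Qᵀ P Pᵀ Q
  have hblock : ∑ i : Fin m, s (Fin.castLE hmp i) = (Qᵀ * (P * Pᵀ) * Q).trace := by
    have h3 : ∀ i j, (Pᵀ * Q) i j = (Vᵀ * Q) (Fin.castLE hmp i) j := by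
      intro i j; simp [hP, Matrix.mul_apply]
    have h4 : ∑ i : Fin m, s (Fin.castLE hmp i) = ∑ i, ∑ j, (Pᵀ * Q) i j ^ 2 := by
      refine Finset.sum_congr rfl fun i _ => ?_
      refine Finset.sum_congr rfl fun j _ => ?_
      rw [h3]
    rw [h4, sum_sq_eq_trace]
    congr 1
    simp only [Matrix.transpose_mul, Matrix.transpose_transpose, Matrix.mul_assoc]
  -- E and its Gram matrix
  set E : Matrix (Fin p) (Fin m) ℝ := (1 - P * Pᵀ) * Q with hE
  have hproj : ((1 : Matrix (Fin p) (Fin p) ℝ) - P * Pᵀ) * (1 - P * Pᵀ) = 1 - P * Pᵀ := by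
    have hPP : P * Pᵀ * (P * Pᵀ) = P * Pᵀ := by
      rw [Matrix.mul_assoc, ← Matrix.mul_assoc Pᵀ, hPtP, Matrix.one_mul]
    rw [Matrix.sub_mul, Matrix.mul_sub, Matrix.mul_sub, hPP]
    simp
  have hEtE : Eᵀ * E = 1 - Qᵀ * (P * Pᵀ) * Q := by
    rw [hE, Matrix.transpose_mul, Matrix.transpose_sub, Matrix.transpose_one,
      Matrix.transpose_mul, Matrix.transpose_transpose]
    calc Qᵀ * (1 - P * Pᵀ) * ((1 - P * Pᵀ) * Q)
        = Qᵀ * (((1 - P * Pᵀ) * (1 - P * Pᵀ)) * Q) := by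
          simp only [Matrix.mul_assoc]
      _ = Qᵀ * ((1 - P * Pᵀ) * Q) := by rw [hproj]
      _ = 1 - Qᵀ * (P * Pᵀ) * Q := by
          rw [Matrix.sub_mul, Matrix.one_mul, Matrix.mul_sub, hQ]
          simp only [Matrix.mul_assoc]
  have htraceE : (Qᵀ * (P * Pᵀ) * Q).trace = m - frobNorm E ^ 2 := by
    rw [frobNorm_sq, hEtE, Matrix.trace_sub, Matrix.trace_one]
    simp
  -- spectral bound
  have hFS : frobNorm E ^ 2 ≤ m * specNorm E ^ 2 := frob_sq_le_card_spec E
  have hfinal : (m : ℝ) * lm ^ 2 * (1 - specNorm E ^ 2) ≤ lm ^ 2 * (m - frobNorm E ^ 2) := by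
    have := mul_le_mul_of_nonneg_left (sub_le_sub_left hFS (m : ℝ)) (sq_nonneg lm)
    calc (m : ℝ) * lm ^ 2 * (1 - specNorm E ^ 2)
        = lm ^ 2 * ((m : ℝ) - m * specNorm E ^ 2) := by ring
      _ ≤ lm ^ 2 * ((m : ℝ) - frobNorm E ^ 2) := this
  rw [ge_iff_le, key]
  calc (m : ℝ) * lm ^ 2 * (1 - specNorm E ^ 2)
      ≤ lm ^ 2 * ((m : ℝ) - frobNorm E ^ 2) := hfinal
    _ = lm ^ 2 * (Qᵀ * (P * Pᵀ) * Q).trace := by rw [htraceE]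
    _ = lm ^ 2 * ∑ i : Fin m, s (Fin.castLE hmp i) := by rw [hblock]
    _ ≤ ∑ i, lam i ^ 2 * s i := hstep1
end
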